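/- arXiv:1803.07928 — 6 statements merged into one kernel-verified Lean document; each statement's English description precedes it below -/
import Mathlib

section
/- Suppose the digraph G_p' (constructed from digraph G on n vertices by the two-vertex-cycle gadget, with single input u connected to every v_i^1) admits a spanning subgraph that is a stem u → v_{s_1}^1 → v_{s_1}^2 → v_{s_2}^1 → ... → v_{s_n}^1 → v_{s_n}^2 covering all 2n state vertices, where s is a permutation of {1,...,n}. Then v_{s_1} → v_{s_2} → ... → v_{s_n} is a Hamiltonian path in G. -/
/-- A Hamiltonian path in a digraph with adjacency relation `adj`. -/
def IsHamPath {V : Type*} [Fintype V] (adj : V → V → Prop) (l : List V) : Prop :=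
  l.Nodup ∧ (∀ v, v ∈ l) ∧ l.Chain' adj

/-- The auxiliary digraph `G_p'` built from a digraph `E` on `Fin n`:
`none` is the input vertex `u`, `some (i, false)` is `v_i^1` and
`some (i, true)` is `v_i^2`; edges `u → v_i^1`, `v_i^1 → v_i^2`,
`v_i^2 → v_i^1`, and `v_i^2 → v_j^1` whenever `E i j`. -/
def auxAdj {n : ℕ} (E : Fin n → Fin n → Prop) :
    Option (Fin n × Bool) → Option (Fin n × Bool) → Prop
  | none, some (_, false) => True
  | some (i, false), some (j, true) => i = j
  | some (i, true), some (j, false) => i = j ∨ E i j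
  | _, _ => False

/-- The stem `u → v_{s 0}^1 → v_{s 0}^2 → v_{s 1}^1 → ⋯ → v_{s (n-1)}^1 → v_{s (n-1)}^2`
determined by a permutation `s` of `{1,…,n}`. -/
def stem {n : ℕ} (s : Equiv.Perm (Fin n)) : List (Option (Fin n × Bool)) :=
  none :: ((List.ofFn fun i : Fin n =>
    [some ((s i, false) : Fin n × Bool), some ((s i, true) : Fin n × Bool)]).flatten)

/-! The stem enters block `v_{s i}^1, v_{s i}^2` only from the last vertex of the previous block,
so each junction `v_{s i}^2 → v_{s (i+1)}^1` is either a gadget edge (`s i = s (i+1)`, excluded by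
injectivity of `s`) or an edge of `G`. -/

theorem List.IsChain.rel_getLast_head_of_flatten_ofFn {α : Type*} {R : α → α → Prop} {n : ℕ}
    {f : Fin n → List α} (hf : ∀ i, f i ≠ []) (h : (List.ofFn f).flatten.IsChain R)
    (i : ℕ) (hi : i + 1 < n) :
    R ((f ⟨i, by omega⟩).getLast (hf _)) ((f ⟨i + 1, hi⟩).head (hf _)) := by
  have hnil : [] ∉ List.ofFn f := by simpa [List.mem_ofFn, eq_comm] using hf
  have hjunction := List.isChain_ofFn.1 ((List.isChain_flatten hnil).1 h).2 i hi
  exact hjunction _ (List.getLast?_eq_some_getLast _) _ (List.head?_eq_some_head _)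

theorem eq_or_adj_of_isChain_stem {n : ℕ} {E : Fin n → Fin n → Prop} {s : Equiv.Perm (Fin n)}
    (hstem : (stem s).IsChain (auxAdj E)) (i : ℕ) (hi : i + 1 < n) :
    s ⟨i, by omega⟩ = s ⟨i + 1, hi⟩ ∨ E (s ⟨i, by omega⟩) (s ⟨i + 1, hi⟩) :=
  (List.isChain_cons.1 hstem).2.rel_getLast_head_of_flatten_ofFn (by simp) i hi

/-- If the stem determined by the permutation `s` is a (spanning) directed
path of the auxiliary digraph `G_p'`, then `v_{s 1} → ⋯ → v_{s n}` is a
Hamiltonian path of `G`. -/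
theorem stmt3 {n : ℕ} (E : Fin n → Fin n → Prop) (s : Equiv.Perm (Fin n))
    (hstem : (stem s).Chain' (auxAdj E)) :
    IsHamPath E (List.ofFn fun i => s i) := by
  refine ⟨List.nodup_ofFn.2 s.injective, fun v => List.mem_ofFn.2 ⟨s.symm v, by simp⟩,
    List.isChain_ofFn.2 fun i hi => ?_⟩
  have hne : s ⟨i, by omega⟩ ≠ s ⟨i + 1, hi⟩ := s.injective.ne (by simp [Fin.ext_iff])
  exact (eq_or_adj_of_isChain_stem hstem i hi).resolve_left hne
end

section
/- Let (A,B) be a structured pair whose associated system digraph is D(A,B) and system bipartite graph is B(A,B). Assign a positive cost to each edge. The minimum total cost of an edge set whose removal makes (A,B) structurally uncontrollable equals the minimum of: (i) the minimum cost of an edge set whose removal makes some state vertex unreachable from the inputs in D(A,B), and (ii) the minimum cost of an edge set whose removal decreases the maximum matching number of B(A,B) (i.e., a minimum cost 1-blocker). -/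
/-- Adjacency of the system digraph `D(A,B)` given by a set `EA` of state
edges and a set `EB` of input edges. -/
def sysAdj {n q : ℕ} (EA : Finset (Fin n × Fin n)) (EB : Finset (Fin q × Fin n)) :
    (Fin q ⊕ Fin n) → (Fin q ⊕ Fin n) → Prop
  | Sum.inl u, Sum.inr x => (u, x) ∈ EB
  | Sum.inr x, Sum.inr y => (x, y) ∈ EA
  | _, _ => False

/-- Every state vertex is reachable from some input vertex in `D(A,B)`. -/
def InputReachable {n q : ℕ} (EA : Finset (Fin n × Fin n))
    (EB : Finset (Fin q × Fin n)) : Prop :=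
  ∀ x : Fin n, ∃ u : Fin q,
    Relation.ReflTransGen (sysAdj EA EB) (Sum.inl u) (Sum.inr x)

/-- The system bipartite graph `B(A,B)`: left vertices `U ⊕ X`, right
vertices `X`, with the edges of `D(A,B)`. -/
def sysBip {n q : ℕ} (EA : Finset (Fin n × Fin n)) (EB : Finset (Fin q × Fin n)) :
    Finset ((Fin q ⊕ Fin n) × Fin n) :=
  EB.image (fun e => (Sum.inl e.1, e.2)) ∪ EA.image (fun e => (Sum.inr e.1, e.2))

/-- There is a matching of `B(A,B)` saturating all right (state) vertices. -/
def SaturatingMatching {n q : ℕ} (EA : Finset (Fin n × Fin n))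
    (EB : Finset (Fin q × Fin n)) : Prop :=
  ∃ f : Fin n → (Fin q ⊕ Fin n), Function.Injective f ∧
    ∀ x : Fin n, (f x, x) ∈ sysBip EA EB

/-- Structural controllability of the pair described by the edge sets
`(EA, EB)` (Lin's theorem: input-reachability + saturating matching). -/
def StructCtrb {n q : ℕ} (EA : Finset (Fin n × Fin n))
    (EB : Finset (Fin q × Fin n)) : Prop :=
  InputReachable EA EB ∧ SaturatingMatching EA EB

/-- `M` is a matching of the bipartite edge set `Eb`. -/
def IsMatching {L R : Type*} (Eb M : Finset (L × R)) : Prop :=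
  M ⊆ Eb ∧ ∀ e ∈ M, ∀ f ∈ M, e ≠ f → e.1 ≠ f.1 ∧ e.2 ≠ f.2

/-- The maximum matching number of a bipartite edge set. -/
noncomputable def matchNum {L R : Type*} (Eb : Finset (L × R)) : ℕ :=
  sSup {k | ∃ M : Finset (L × R), IsMatching Eb M ∧ M.card = k}

/-!
Structural controllability is input-reachability together with a matching of `B(A,B)` saturating
the states, i.e. of size `n`. As `(A,B)` is controllable its matching number is `n`, so a removal
breaks the matching condition exactly when it lowers the matching number. Hence the removals
destroying controllability are the union of those destroying reachability and the `1`-blockers,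
and the minimum cost over a union of two finite sets of costs is the smaller of the two minima.
Both sets are nonempty when `n > 0` (remove every edge) and empty when `n = 0`, which keeps
`sInf ∅ = 0` from spoiling the identity.
-/

open Finset

section Matching

variable {L R : Type*} {Eb M : Finset (L × R)}

theorem IsMatching.injOn_fst (hM : IsMatching Eb M) : Set.InjOn Prod.fst (M : Set (L × R)) :=
  fun e he f hf h => by_contra fun hne => (hM.2 e he f hf hne).1 h

theorem IsMatching.injOn_snd (hM : IsMatching Eb M) : Set.InjOn Prod.snd (M : Set (L × R)) :=
  fun e he f hf h => by_contra fun hne => (hM.2 e he f hf hne).2 h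

theorem IsMatching.card_le [Fintype R] (hM : IsMatching Eb M) : #M ≤ Fintype.card R := by
  classical
  calc #M = #(M.image Prod.snd) := (card_image_of_injOn hM.injOn_snd).symm
    _ ≤ Fintype.card R := card_le_univ _

theorem isMatching_empty (Eb : Finset (L × R)) : IsMatching Eb ∅ :=
  ⟨empty_subset _, by simp⟩

theorem bddAbove_matchingCards [Fintype R] (Eb : Finset (L × R)) :
    BddAbove {k | ∃ M, IsMatching Eb M ∧ #M = k} :=
  ⟨Fintype.card R, by rintro k ⟨M, hM, rfl⟩; exact hM.card_le⟩

theorem exists_isMatching_card_eq_matchNum [Fintype R] (Eb : Finset (L × R)) :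
    ∃ M, IsMatching Eb M ∧ #M = matchNum Eb :=
  Nat.sSup_mem (s := {k | ∃ M, IsMatching Eb M ∧ #M = k}) ⟨0, ∅, isMatching_empty Eb, rfl⟩
    (bddAbove_matchingCards Eb)

theorem IsMatching.card_le_matchNum [Fintype R] (hM : IsMatching Eb M) : #M ≤ matchNum Eb :=
  le_csSup (bddAbove_matchingCards Eb) ⟨M, hM, rfl⟩

theorem matchNum_le_card [Fintype R] (Eb : Finset (L × R)) : matchNum Eb ≤ Fintype.card R := by
  obtain ⟨M, hM, hcard⟩ := exists_isMatching_card_eq_matchNum Eb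
  exact hcard ▸ hM.card_le

theorem matchNum_empty [Fintype R] : matchNum (∅ : Finset (L × R)) = 0 := by
  obtain ⟨M, hM, hcard⟩ := exists_isMatching_card_eq_matchNum (∅ : Finset (L × R))
  rw [← hcard, subset_empty.mp hM.1, card_empty]

theorem matchNum_eq_card_iff [Fintype R] :
    matchNum Eb = Fintype.card R ↔
      ∃ f : R → L, Function.Injective f ∧ ∀ x, (f x, x) ∈ Eb := by
  classical
  constructor
  · intro h
    obtain ⟨M, hM, hcard⟩ := exists_isMatching_card_eq_matchNum Eb
    have himage : M.image Prod.snd = univ :=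
      eq_univ_of_card _ (by rw [card_image_of_injOn hM.injOn_snd, hcard, h])
    have hcover : ∀ x, ∃ l, (l, x) ∈ M := fun x => by
      obtain ⟨⟨l, _⟩, he, rfl⟩ := mem_image.mp (himage ▸ mem_univ x)
      exact ⟨l, he⟩
    choose g hg using hcover
    exact ⟨g, fun a b hab => congrArg Prod.snd (hM.injOn_fst (hg a) (hg b) hab),
      fun x => hM.1 (hg x)⟩
  · rintro ⟨f, hf, hEb⟩
    let M := univ.image fun x => (f x, x)
    have hM : IsMatching Eb M := by
      refine ⟨by simpa [M, image_subset_iff] using hEb, ?_⟩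
      simp only [M, mem_image, mem_univ, true_and]
      rintro _ ⟨x, rfl⟩ _ ⟨y, rfl⟩ hne
      have hxy : x ≠ y := fun h => hne (h ▸ rfl)
      exact ⟨hf.ne hxy, hxy⟩
    have hcard : #M = Fintype.card R :=
      card_image_of_injective _ fun x y h => congrArg Prod.snd h
    exact le_antisymm (matchNum_le_card Eb) (hcard ▸ hM.card_le_matchNum)

end Matching

section Controllability

variable {n q : ℕ}

theorem saturatingMatching_iff_matchNum_eq (EA : Finset (Fin n × Fin n))
    (EB : Finset (Fin q × Fin n)) :
    SaturatingMatching EA EB ↔ matchNum (sysBip EA EB) = n := by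
  simpa [SaturatingMatching] using (matchNum_eq_card_iff (Eb := sysBip EA EB)).symm

theorem not_structCtrb_iff (EA : Finset (Fin n × Fin n)) (EB : Finset (Fin q × Fin n)) :
    ¬ StructCtrb EA EB ↔ ¬ InputReachable EA EB ∨ matchNum (sysBip EA EB) < n := by
  have hle : matchNum (sysBip EA EB) ≤ n := by simpa using matchNum_le_card (sysBip EA EB)
  rw [StructCtrb, not_and_or, saturatingMatching_iff_matchNum_eq, hle.lt_iff_ne]

theorem not_inputReachable_empty (hn : 0 < n) :
    ¬ InputReachable (∅ : Finset (Fin n × Fin n)) (∅ : Finset (Fin q × Fin n)) := by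
  intro h
  obtain ⟨u, hu⟩ := h ⟨0, hn⟩
  rcases hu.cases_tail with h | ⟨c, -, hc⟩
  · cases h
  · rcases c with c | c <;> simp [sysAdj] at hc

theorem sysBip_empty : sysBip (∅ : Finset (Fin n × Fin n)) (∅ : Finset (Fin q × Fin n)) = ∅ := by
  simp [sysBip]

end Controllability

section RemovalCosts

variable {α β : Type*} [DecidableEq α] [DecidableEq β]
  (EA : Finset α) (EB : Finset β) (cA : α → ℝ) (cB : β → ℝ)

def removalCosts (P : Finset α → Finset β → Prop) : Set ℝ :=
  {r | ∃ FA ⊆ EA, ∃ FB ⊆ EB, P (EA \ FA) (EB \ FB) ∧ r = ∑ e ∈ FA, cA e + ∑ e ∈ FB, cB e}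

variable {EA EB cA cB}

theorem removalCosts_finite (P : Finset α → Finset β → Prop) :
    (removalCosts EA EB cA cB P).Finite := by
  refine ((EA.powerset ×ˢ EB.powerset).finite_toSet.image
    fun F => ∑ e ∈ F.1, cA e + ∑ e ∈ F.2, cB e).subset ?_
  rintro r ⟨FA, hFA, FB, hFB, -, rfl⟩
  exact ⟨(FA, FB), by simp [hFA, hFB], rfl⟩

theorem removalCosts_or (P Q : Finset α → Finset β → Prop) :
    removalCosts EA EB cA cB (fun A B => P A B ∨ Q A B) =
      removalCosts EA EB cA cB P ∪ removalCosts EA EB cA cB Q := by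
  ext r
  constructor
  · rintro ⟨FA, hFA, FB, hFB, hP | hQ, rfl⟩
    exacts [Or.inl ⟨FA, hFA, FB, hFB, hP, rfl⟩, Or.inr ⟨FA, hFA, FB, hFB, hQ, rfl⟩]
  · rintro (⟨FA, hFA, FB, hFB, hP, rfl⟩ | ⟨FA, hFA, FB, hFB, hQ, rfl⟩)
    exacts [⟨FA, hFA, FB, hFB, Or.inl hP, rfl⟩, ⟨FA, hFA, FB, hFB, Or.inr hQ, rfl⟩]

theorem removalCosts_nonempty_iff (P : Finset α → Finset β → Prop) :
    (removalCosts EA EB cA cB P).Nonempty ↔ ∃ FA ⊆ EA, ∃ FB ⊆ EB, P (EA \ FA) (EB \ FB) := by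
  simp [removalCosts, Set.Nonempty]

end RemovalCosts

theorem Real.sInf_union_of_finite {s t : Set ℝ} (hs : s.Finite) (ht : t.Finite)
    (hst : s.Nonempty ↔ t.Nonempty) : sInf (s ∪ t) = min (sInf s) (sInf t) := by
  by_cases hne : s.Nonempty
  · exact csInf_union hs.bddBelow hne ht.bddBelow (hst.mp hne)
  · rw [Set.not_nonempty_iff_eq_empty.mp hne,
      Set.not_nonempty_iff_eq_empty.mp (hst.not.mp hne), Set.union_empty, Real.sInf_empty, min_self]

theorem stmt4_general {n q : ℕ} (EA : Finset (Fin n × Fin n)) (EB : Finset (Fin q × Fin n))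
    (cA : Fin n × Fin n → ℝ) (cB : Fin q × Fin n → ℝ)
    (hctrb : StructCtrb EA EB) :
    sInf {r : ℝ | ∃ FA ⊆ EA, ∃ FB ⊆ EB,
        ¬ StructCtrb (EA \ FA) (EB \ FB) ∧
        r = ∑ e ∈ FA, cA e + ∑ e ∈ FB, cB e}
      = min
        (sInf {r : ℝ | ∃ FA ⊆ EA, ∃ FB ⊆ EB,
          ¬ InputReachable (EA \ FA) (EB \ FB) ∧
          r = ∑ e ∈ FA, cA e + ∑ e ∈ FB, cB e})
        (sInf {r : ℝ | ∃ FA ⊆ EA, ∃ FB ⊆ EB,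
          matchNum (sysBip (EA \ FA) (EB \ FB)) < matchNum (sysBip EA EB) ∧
          r = ∑ e ∈ FA, cA e + ∑ e ∈ FB, cB e}) := by
  have hfull : matchNum (sysBip EA EB) = n :=
    (saturatingMatching_iff_matchNum_eq EA EB).mp hctrb.2
  have hsplit : removalCosts EA EB cA cB (fun A B => ¬ StructCtrb A B) =
      removalCosts EA EB cA cB (fun A B => ¬ InputReachable A B) ∪
        removalCosts EA EB cA cB (fun A B => matchNum (sysBip A B) < matchNum (sysBip EA EB)) := by
    simp only [not_structCtrb_iff, hfull]
    exact removalCosts_or _ _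
  have hnonempty :
      (removalCosts EA EB cA cB (fun A B => ¬ InputReachable A B)).Nonempty ↔
        (removalCosts EA EB cA cB
          (fun A B => matchNum (sysBip A B) < matchNum (sysBip EA EB))).Nonempty := by
    simp only [removalCosts_nonempty_iff]
    rcases Nat.eq_zero_or_pos n with rfl | hn
    · simp [InputReachable, hfull]
    · refine iff_of_true ⟨EA, subset_rfl, EB, subset_rfl, ?_⟩ ⟨EA, subset_rfl, EB, subset_rfl, ?_⟩
      · simpa using not_inputReachable_empty hn
      · simpa [sysBip_empty, matchNum_empty, hfull] using hn
  exact (congrArg sInf hsplit).trans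
    (Real.sInf_union_of_finite (removalCosts_finite _) (removalCosts_finite _) hnonempty)

/-- The minimum total cost of an edge set whose removal destroys structural
controllability equals the minimum of (i) the minimum cost of an edge set
whose removal destroys input-reachability of some state in `D(A,B)` and
(ii) the minimum cost of a `1`-blocker of `B(A,B)`. -/
theorem stmt4 {n q : ℕ} (EA : Finset (Fin n × Fin n)) (EB : Finset (Fin q × Fin n))
    (cA : Fin n × Fin n → ℝ) (cB : Fin q × Fin n → ℝ)
    (hcA : ∀ e ∈ EA, 0 < cA e) (hcB : ∀ e ∈ EB, 0 < cB e)
    (hctrb : StructCtrb EA EB) :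
    sInf {r : ℝ | ∃ FA ⊆ EA, ∃ FB ⊆ EB,
        ¬ StructCtrb (EA \ FA) (EB \ FB) ∧
        r = ∑ e ∈ FA, cA e + ∑ e ∈ FB, cB e}
      = min
        (sInf {r : ℝ | ∃ FA ⊆ EA, ∃ FB ⊆ EB,
          ¬ InputReachable (EA \ FA) (EB \ FB) ∧
          r = ∑ e ∈ FA, cA e + ∑ e ∈ FB, cB e})
        (sInf {r : ℝ | ∃ FA ⊆ EA, ∃ FB ⊆ EB,
          matchNum (sysBip (EA \ FA) (EB \ FB)) < matchNum (sysBip EA EB) ∧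
          r = ∑ e ∈ FA, cA e + ∑ e ∈ FB, cB e}) :=
  stmt4_general EA EB cA cB hctrb
end

section
/- Let (A,B) be the structured system with A = 0_{n×n}, B encoding a bipartite graph B(S_1,S_2,E) with a perfect matching (B_{ij} = 1 iff (s_j,s_i) ∈ E), all edges having unit cost. Then the minimum number of edges whose deletion makes (A,B) structurally uncontrollable equals the matching preclusion number of B(S_1,S_2,E). -/
/-- The bipartite edge set `E` (inputs versus states) has a perfect
matching. -/
def HasPerfectMatching {n : ℕ} (E : Finset (Fin n × Fin n)) : Prop :=
  ∃ f : Fin n → Fin n, Function.Bijective f ∧ ∀ i, (f i, i) ∈ E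

lemma mem_sysBip_empty_iff {n q : ℕ} {EB : Finset (Fin q × Fin n)} {v : Fin q ⊕ Fin n}
    {x : Fin n} : (v, x) ∈ sysBip ∅ EB ↔ ∃ u, v = Sum.inl u ∧ (u, x) ∈ EB := by
  simp only [sysBip, Finset.image_empty, Finset.union_empty, Finset.mem_image, Prod.ext_iff]
  constructor
  · rintro ⟨e, he, rfl, rfl⟩
    exact ⟨e.1, rfl, he⟩
  · rintro ⟨u, rfl, hu⟩
    exact ⟨(u, x), hu, rfl, rfl⟩

/-- With `A = 0` a matched state is reached from its input in one step, so input reachability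
comes for free. -/
lemma structCtrb_empty_iff {n q : ℕ} (EB : Finset (Fin q × Fin n)) :
    StructCtrb ∅ EB ↔ ∃ g : Fin n → Fin q, Function.Injective g ∧ ∀ x, (g x, x) ∈ EB := by
  constructor
  · rintro ⟨-, f, hf_inj, hf⟩
    choose g hfg hg using fun x => mem_sysBip_empty_iff.mp (hf x)
    refine ⟨g, fun a b hab => hf_inj ?_, hg⟩
    rw [hfg a, hfg b, hab]
  · rintro ⟨g, hg_inj, hg⟩
    refine ⟨fun x => ⟨g x, .single (hg x)⟩, fun x => Sum.inl (g x),
      Sum.inl_injective.comp hg_inj, fun x => mem_sysBip_empty_iff.mpr ⟨g x, rfl, hg x⟩⟩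

lemma structCtrb_empty_iff_hasPerfectMatching {n : ℕ} (EB : Finset (Fin n × Fin n)) :
    StructCtrb ∅ EB ↔ HasPerfectMatching EB := by
  simp only [structCtrb_empty_iff, HasPerfectMatching, Finite.injective_iff_bijective]

theorem stmt8_general {n : ℕ} (E : Finset (Fin n × Fin n)) :
    sInf {k : ℕ | ∃ F ⊆ E, ¬ StructCtrb (∅ : Finset (Fin n × Fin n)) (E \ F) ∧ k = F.card}
      = sInf {k : ℕ | ∃ F ⊆ E, ¬ HasPerfectMatching (E \ F) ∧ k = F.card} := by
  simp only [structCtrb_empty_iff_hasPerfectMatching]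

/-- For the structured system `(A, B)` with `A = 0` and input edges given by
a bipartite graph `E` (with `|S₁| = |S₂| = n`) having a perfect matching and
unit edge costs, the minimum number of edges whose deletion destroys
structural controllability equals the matching preclusion number of `E`. -/
theorem stmt8 {n : ℕ} (E : Finset (Fin n × Fin n))
    (hpm : HasPerfectMatching E) :
    sInf {k : ℕ | ∃ F ⊆ E, ¬ StructCtrb (∅ : Finset (Fin n × Fin n)) (E \ F) ∧ k = F.card}
      = sInf {k : ℕ | ∃ F ⊆ E, ¬ HasPerfectMatching (E \ F) ∧ k = F.card} :=
  stmt8_general E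
end

section
/- Let (A, B) be structurally controllable with every state vertex having a self-loop in A. Let N_1, ..., N_l be the source strongly connected components of D(A), and for each i let c_i^u be the total cost of inputs that have an edge into N_i. Then the minimum cost of a set of inputs whose deletion makes (A, B_{S\J_c}) structurally uncontrollable equals min_{1≤i≤l} c_i^u. -/
/-!
Self-loops give the identity matching, so structural controllability reduces to
input-reachability. Every state is reachable from some source SCC, and a source SCC has no
incoming edges from the rest of `D(A)`, so the states of a source SCC `N` are input-reachable
exactly when some input with an edge into `N` survives. Hence deleting a set `J` of inputs
destroys structural controllability iff `J` contains all inputs of some source SCC, and with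
nonnegative costs the cheapest such `J` is the input set of a single source SCC.
-/

attribute [local instance] Classical.propDecidable

/-- Reachability in the state digraph `D(A)`. -/
def stReach {n : ℕ} (EA : Finset (Fin n × Fin n)) (x y : Fin n) : Prop :=
  Relation.ReflTransGen (fun a b => (a, b) ∈ EA) x y

/-- `x` lies in a source SCC of `D(A)`: every vertex from which `x` is
reachable is also reachable from `x`. -/
def InSourceSCC {n : ℕ} (EA : Finset (Fin n × Fin n)) (x : Fin n) : Prop :=
  ∀ y, stReach EA y x → stReach EA x y

/-- The total cost of the inputs with an edge into the SCC of `x`. -/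
noncomputable def sccInputCost {n q : ℕ} (EA : Finset (Fin n × Fin n))
    (EB : Finset (Fin q × Fin n)) (c : Fin q → ℝ) (x : Fin n) : ℝ :=
  ∑ j ∈ Finset.univ.filter
      (fun u : Fin q => ∃ y, stReach EA x y ∧ stReach EA y x ∧ (u, y) ∈ EB), c j

section Digraph

variable {n q : ℕ} (EA : Finset (Fin n × Fin n)) (EB : Finset (Fin q × Fin n))

noncomputable def sccInputs (x : Fin n) : Finset (Fin q) :=
  Finset.univ.filter fun u : Fin q => ∃ y, stReach EA x y ∧ stReach EA y x ∧ (u, y) ∈ EB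

theorem sccInputCost_eq_sum_sccInputs (c : Fin q → ℝ) (x : Fin n) :
    sccInputCost EA EB c x = ∑ j ∈ sccInputs EA EB x, c j := rfl

theorem sccInputs_filter_notMem (J : Finset (Fin q)) (x : Fin n) :
    sccInputs EA (EB.filter fun e => e.1 ∉ J) x = sccInputs EA EB x \ J := by
  ext u
  simp only [sccInputs, Finset.mem_filter, Finset.mem_univ, true_and, Finset.mem_sdiff]
  constructor
  · rintro ⟨y, hxy, hyx, huy, huJ⟩
    exact ⟨⟨y, hxy, hyx, huy⟩, huJ⟩
  · rintro ⟨⟨y, hxy, hyx, huy⟩, huJ⟩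
    exact ⟨y, hxy, hyx, huy, huJ⟩

theorem saturatingMatching_of_selfLoops (hself : ∀ i : Fin n, (i, i) ∈ EA) :
    SaturatingMatching EA EB :=
  ⟨Sum.inr, Sum.inr_injective, fun x =>
    Finset.mem_union_right _ (Finset.mem_image.2 ⟨(x, x), hself x, rfl⟩)⟩

theorem structCtrb_iff_inputReachable (hself : ∀ i : Fin n, (i, i) ∈ EA) :
    StructCtrb EA EB ↔ InputReachable EA EB :=
  and_iff_left (saturatingMatching_of_selfLoops EA EB hself)

variable {EA EB}

theorem sysAdj_reflTransGen_of_stReach {y z : Fin n} (h : stReach EA y z) :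
    Relation.ReflTransGen (sysAdj EA EB) (Sum.inr y) (Sum.inr z) := by
  induction h with
  | refl => exact .refl
  | tail _ hbc ih => exact ih.tail hbc

theorem exists_input_edge_of_sysAdj_reflTransGen {u : Fin q} {v : Fin q ⊕ Fin n}
    (h : Relation.ReflTransGen (sysAdj EA EB) (Sum.inl u) v) :
    v = Sum.inl u ∨ ∃ y z, (u, y) ∈ EB ∧ v = Sum.inr z ∧ stReach EA y z := by
  induction h with
  | refl => exact Or.inl rfl
  | @tail b c _ hbc ih =>
    rcases ih with rfl | ⟨y, z, huy, rfl, hyz⟩ <;> rcases c with u' | w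
    · exact hbc.elim
    · exact Or.inr ⟨w, w, hbc, rfl, .refl⟩
    · exact hbc.elim
    · exact Or.inr ⟨y, w, huy, rfl, hyz.tail hbc⟩

theorem exists_inSourceSCC_stReach (z : Fin n) : ∃ x, InSourceSCC EA x ∧ stReach EA x z := by
  let before : Fin n → Fin n → Prop := fun y x => stReach EA y x ∧ ¬ stReach EA x y
  have : IsTrans (Fin n) before :=
    ⟨fun a b c hab hbc => ⟨hab.1.trans hbc.1, fun hca => hbc.2 (hca.trans hab.1)⟩⟩
  have : Std.Irrefl before := ⟨fun a haa => haa.2 haa.1⟩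
  induction z using (Finite.wellFounded_of_trans_of_irrefl before).induction with
  | _ z ih =>
    by_cases hz : InSourceSCC EA z
    · exact ⟨z, hz, .refl⟩
    · obtain ⟨y, hyz, hzy⟩ : ∃ y, stReach EA y z ∧ ¬ stReach EA z y := by
        simpa [InSourceSCC] using hz
      obtain ⟨x, hx, hxy⟩ := ih y ⟨hyz, hzy⟩
      exact ⟨x, hx, hxy.trans hyz⟩

theorem inputReachable_iff_forall_inSourceSCC :
    InputReachable EA EB ↔ ∀ x, InSourceSCC EA x → (sccInputs EA EB x).Nonempty := by
  constructor
  · intro hreach x hx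
    obtain ⟨u, hu⟩ := hreach x
    rcases exists_input_edge_of_sysAdj_reflTransGen hu with h | ⟨y, w, huy, hw, hyx⟩
    · cases h
    · cases hw
      exact ⟨u, Finset.mem_filter.2 ⟨Finset.mem_univ u, y, hx y hyx, hyx, huy⟩⟩
  · intro h z
    obtain ⟨x, hx, hxz⟩ := exists_inSourceSCC_stReach (EA := EA) z
    obtain ⟨u, hu⟩ := h x hx
    obtain ⟨-, y, -, hyx, huy⟩ := Finset.mem_filter.1 hu
    exact ⟨u, .head (show sysAdj EA EB (Sum.inl u) (Sum.inr y) from huy)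
      (sysAdj_reflTransGen_of_stReach (hyx.trans hxz))⟩

theorem not_structCtrb_filter_notMem_iff (hself : ∀ i : Fin n, (i, i) ∈ EA)
    (J : Finset (Fin q)) :
    ¬ StructCtrb EA (EB.filter fun e => e.1 ∉ J) ↔
      ∃ x, InSourceSCC EA x ∧ sccInputs EA EB x ⊆ J := by
  simp [structCtrb_iff_inputReachable _ _ hself, inputReachable_iff_forall_inSourceSCC,
    sccInputs_filter_notMem, Finset.not_nonempty_iff_eq_empty, Finset.sdiff_eq_empty_iff_subset]

end Digraph

theorem stmt13_general {n q : ℕ} (EA : Finset (Fin n × Fin n)) (EB : Finset (Fin q × Fin n))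
    (c : Fin q → ℝ) (hc : ∀ j, 0 ≤ c j)
    (hself : ∀ i : Fin n, (i, i) ∈ EA) :
    sInf {r : ℝ | ∃ Jc : Finset (Fin q),
        ¬ StructCtrb EA (EB.filter fun e => e.1 ∉ Jc) ∧ r = ∑ j ∈ Jc, c j}
      = sInf {r : ℝ | ∃ x : Fin n, InSourceSCC EA x ∧ r = sccInputCost EA EB c x} := by
  simp only [not_structCtrb_filter_notMem_iff hself, sccInputCost_eq_sum_sccInputs]
  apply csInf_eq_csInf_of_forall_exists_le
  · rintro _ ⟨J, ⟨x, hx, hxJ⟩, rfl⟩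
    exact ⟨_, ⟨x, hx, rfl⟩,
      Finset.sum_le_sum_of_subset_of_nonneg hxJ fun j _ _ => hc j⟩
  · rintro _ ⟨x, hx, rfl⟩
    exact ⟨_, ⟨sccInputs EA EB x, ⟨x, hx, subset_rfl⟩, rfl⟩, le_rfl⟩

/-- For a structurally controllable pair in which every state vertex has a
self-loop, the minimum cost of a set of inputs whose deletion destroys
structural controllability equals the minimum over source SCCs `N_i` of the
total cost `c_i^u` of the inputs with an edge into `N_i`. -/
theorem stmt13 {n q : ℕ} (EA : Finset (Fin n × Fin n)) (EB : Finset (Fin q × Fin n))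
    (c : Fin q → ℝ) (hc : ∀ j, 0 ≤ c j)
    (hself : ∀ i : Fin n, (i, i) ∈ EA)
    (hctrb : StructCtrb EA EB) :
    sInf {r : ℝ | ∃ Jc : Finset (Fin q),
        ¬ StructCtrb EA (EB.filter fun e => e.1 ∉ Jc) ∧ r = ∑ j ∈ Jc, c j}
      = sInf {r : ℝ | ∃ x : Fin n, InSourceSCC EA x ∧ r = sccInputCost EA EB c x} :=
  stmt13_general EA EB c hc hself
end

section
/- Let D(A, B) be a system digraph in which every state vertex is input-reachable. A state vertex x is input-unreachable in D(A, B_{S\J_c}) (after deleting the inputs in J_c) for some x if and only if there exists a source SCC N_i of D(A) all of whose in-neighbor inputs lie in J_c. -/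
/-! An input-unreachable state `x` has, by finiteness, an ancestor `z` that is minimal for the
reachability preorder of `D(A)`; the SCC of `z` is a source SCC, and any input entering it would
reach `x`. Conversely, every state reaching a vertex of a source SCC lies in that SCC, so if all
inputs entering it are deleted, nothing reaches it. -/

theorem Relation.exists_source_reflTransGen {α : Type*} [Finite α] (r : α → α → Prop) (x : α) :
    ∃ z, ReflTransGen r z x ∧ ∀ y, ReflTransGen r y z → ReflTransGen r z y := by
  let _ : Preorder α :=
    { le := ReflTransGen r, le_refl := fun _ ↦ .refl, le_trans := fun _ _ _ ↦ .trans }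
  obtain ⟨z, hzx, -, hz⟩ := exists_minimal_le_of_wellFoundedLT (fun _ : α ↦ True) x trivial
  exact ⟨z, hzx, fun y hyz ↦ hz trivial hyz⟩

theorem stmt14_general {n q : ℕ} (adjA : Fin n → Fin n → Prop) (B : Fin q → Fin n → Prop)
    (Jc : Set (Fin q)) :
    (∃ x : Fin n, ¬ ∃ u ∉ Jc, ∃ y : Fin n,
        B u y ∧ Relation.ReflTransGen adjA y x)
      ↔ (∃ x : Fin n,
          (∀ y, Relation.ReflTransGen adjA y x → Relation.ReflTransGen adjA x y) ∧
          ∀ u : Fin q, (∃ y, Relation.ReflTransGen adjA x y ∧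
              Relation.ReflTransGen adjA y x ∧ B u y) → u ∈ Jc) := by
  constructor
  · rintro ⟨x, hx⟩
    obtain ⟨z, hzx, hz⟩ := Relation.exists_source_reflTransGen adjA x
    refine ⟨z, hz, fun u ⟨y, _, hyz, hBy⟩ ↦ ?_⟩
    by_contra hu
    exact hx ⟨u, hu, y, hBy, hyz.trans hzx⟩
  · rintro ⟨x, hsrc, hin⟩
    exact ⟨x, fun ⟨u, hu, y, hBy, hyx⟩ ↦ hu (hin u ⟨y, hsrc y hyx, hyx, hBy⟩)⟩

/-- Let `adjA` be the state digraph `D(A)` and `B` the input-to-state edges,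
with every state vertex input-reachable in `D(A,B)`.  After deleting the
inputs in `J_c`, some state vertex is input-unreachable iff there is a
source SCC of `D(A)` all of whose in-neighbor inputs lie in `J_c`. -/
theorem stmt14 {n q : ℕ} (adjA : Fin n → Fin n → Prop) (B : Fin q → Fin n → Prop)
    (hreach : ∀ x : Fin n, ∃ u : Fin q, ∃ y : Fin n,
      B u y ∧ Relation.ReflTransGen adjA y x)
    (Jc : Set (Fin q)) :
    (∃ x : Fin n, ¬ ∃ u ∉ Jc, ∃ y : Fin n,
        B u y ∧ Relation.ReflTransGen adjA y x)
      ↔ (∃ x : Fin n,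
          (∀ y, Relation.ReflTransGen adjA y x → Relation.ReflTransGen adjA x y) ∧
          ∀ u : Fin q, (∃ y, Relation.ReflTransGen adjA x y ∧
              Relation.ReflTransGen adjA y x ∧ B u y) → u ∈ Jc) :=
  stmt14_general adjA B Jc
end

section
/- Let B ∈ {0,1}^{(m+1)×(m+1)} have exactly one nonzero per column (B = I_{m+1}) and let A ∈ {0,1}^{(m+1)×(m+1)}. Fix J_c ⊆ {1,...,m}. If every state vertex remains input-reachable after deleting inputs J_c, then grank([A, B_{S_+\J_c}]) < m+1 if and only if grank(A_{J_c, S}) < |J_c|, where A_{J_c,S} is the submatrix of A with rows indexed by J_c (all columns S = {1,...,m+1}). -/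
/-!
A matching of `[A, B_{S₊∖J_c}]` saturating all rows must match every row `i ∉ J_c` either to
`A` or to its own identity column, while a row `i ∈ J_c` has no identity column left and must be
matched inside `A`. Conversely, a matching of the rows `J_c` into `A` is completed to a
row-saturating one by the identity columns. Full row generic rank is the existence of a
row-saturating matching, so both sides of the equivalence say that no such matching exists.
-/

open Function

/-- The generic rank of a structured matrix with zero–nonzero pattern `M`:
the maximum matching number of the bipartite row–column graph with edges at
the nonzero positions. -/
noncomputable def grank {α β : Type*} (M : α → β → Prop) : ℕ :=
  sSup {k | ∃ (f : Fin k → α) (g : Fin k → β),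
    Function.Injective f ∧ Function.Injective g ∧ ∀ i, M (f i) (g i)}

section GenericRank

variable {α β : Type*} (M : α → β → Prop)

def matchingSizes : Set ℕ :=
  {k | ∃ (f : Fin k → α) (g : Fin k → β), Injective f ∧ Injective g ∧ ∀ i, M (f i) (g i)}

lemma zero_mem_matchingSizes : 0 ∈ matchingSizes M :=
  ⟨Fin.elim0, Fin.elim0, fun i => i.elim0, fun i => i.elim0, fun i => i.elim0⟩

variable [Fintype α]

lemma le_card_of_mem_matchingSizes {k : ℕ} (hk : k ∈ matchingSizes M) :
    k ≤ Fintype.card α := by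
  obtain ⟨f, -, hf, -, -⟩ := hk
  simpa using Fintype.card_le_of_injective f hf

lemma card_mem_matchingSizes_iff :
    Fintype.card α ∈ matchingSizes M ↔ ∃ g : α → β, Injective g ∧ ∀ a, M a (g a) := by
  constructor
  · rintro ⟨f, g, hf, hg, hM⟩
    have hbij : Bijective f := (Fintype.bijective_iff_injective_and_card f).2 ⟨hf, by simp⟩
    let e := (Equiv.ofBijective f hbij).symm
    refine ⟨g ∘ e, hg.comp e.injective, fun a => ?_⟩
    have hfe : f (e a) = a := Equiv.ofBijective_apply_symm_apply f hbij a
    simpa only [hfe, comp_apply] using hM (e a)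
  · rintro ⟨g, hg, hM⟩
    let e := Fintype.equivFin α
    exact ⟨e.symm, g ∘ e.symm, e.symm.injective, hg.comp e.symm.injective, fun i => hM _⟩

lemma grank_lt_card_iff :
    grank M < Fintype.card α ↔ ¬ ∃ g : α → β, Injective g ∧ ∀ a, M a (g a) := by
  have hbdd : BddAbove (matchingSizes M) := ⟨_, fun _ => le_card_of_mem_matchingSizes M⟩
  have hmem : grank M ∈ matchingSizes M := Nat.sSup_mem ⟨0, zero_mem_matchingSizes M⟩ hbdd
  rw [← card_mem_matchingSizes_iff]
  constructor
  · exact fun hlt hcard => (le_csSup hbdd hcard).not_gt hlt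
  · exact fun hcard => (le_card_of_mem_matchingSizes M hmem).lt_of_ne fun h => hcard (h ▸ hmem)

end GenericRank

theorem exists_injective_sumElim_subtype_iff {α β : Type*} (M : α → β → Prop) (p : α → Prop) :
    (∃ g : α → β ⊕ {a // ¬ p a}, Injective g ∧ ∀ a, Sum.elim (M a) (fun j => a = j.val) (g a)) ↔
      ∃ g : {a // p a} → β, Injective g ∧ ∀ a, M a.val (g a) := by
  classical
  constructor
  · rintro ⟨g, hg, hM⟩
    have hleft (a : {a // p a}) : ∃ b, g a = Sum.inl b := by
      rcases h : g a with b | j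
      · exact ⟨b, rfl⟩
      · have hj := hM a
        rw [h, Sum.elim_inr] at hj
        exact absurd (hj ▸ a.2) j.2
    choose g' hg' using hleft
    refine ⟨g', fun a b hab => Subtype.ext (hg ?_), fun a => ?_⟩
    · rw [hg' a, hg' b, hab]
    · simpa only [hg' a, Sum.elim_inl] using hM a
  · rintro ⟨g, hg, hM⟩
    refine ⟨fun a => if h : p a then Sum.inl (g ⟨a, h⟩) else Sum.inr ⟨a, h⟩, ?_, fun a => ?_⟩
    · intro a b hab
      by_cases ha : p a <;> by_cases hb : p b <;> simp only [ha, hb, dite_true, dite_false,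
        Sum.inl.injEq, Sum.inr.injEq, reduceCtorEq, Subtype.mk.injEq] at hab
      · exact congrArg Subtype.val (hg hab)
      · exact hab
    · by_cases ha : p a <;> simp only [ha, dite_true, dite_false, Sum.elim_inl, Sum.elim_inr]
      exact hM ⟨a, ha⟩

theorem stmt15_general {m : ℕ} (A : Fin (m + 1) → Fin (m + 1) → Bool)
    (Jc : Finset (Fin (m + 1))) :
    (grank (fun (i : Fin (m + 1)) (j : Fin (m + 1) ⊕ {j : Fin (m + 1) // j ∉ Jc}) =>
        Sum.elim (fun j => A i j = true) (fun j => i = j.val) j) < m + 1)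
      ↔ grank (fun (i : {i : Fin (m + 1) // i ∈ Jc}) (j : Fin (m + 1)) =>
          A i.val j = true) < Jc.card := by
  have h := exists_injective_sumElim_subtype_iff (fun i j => A i j = true) (· ∈ Jc)
  rwa [← not_iff_not, ← grank_lt_card_iff, Fintype.card_fin,
    ← grank_lt_card_iff fun (i : {i // i ∈ Jc}) j => A i j = true, Fintype.card_coe] at h

/-- With `B = I_{m+1}` (one nonzero per column) and `J_c ⊆ {1,…,m}`, if every
state vertex remains input-reachable after deleting the inputs in `J_c`, then
`grank [A, B_{S₊∖J_c}] < m+1` iff `grank A_{J_c,S} < |J_c|`. -/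
theorem stmt15 {m : ℕ} (A : Fin (m + 1) → Fin (m + 1) → Bool)
    (Jc : Finset (Fin (m + 1))) (hJc : Fin.last m ∉ Jc)
    (hreach : ∀ x : Fin (m + 1), ∃ u ∉ Jc,
      Relation.ReflTransGen (fun i j : Fin (m + 1) => A j i = true) u x) :
    (grank (fun (i : Fin (m + 1)) (j : Fin (m + 1) ⊕ {j : Fin (m + 1) // j ∉ Jc}) =>
        Sum.elim (fun j => A i j = true) (fun j => i = j.val) j) < m + 1)
      ↔ grank (fun (i : {i : Fin (m + 1) // i ∈ Jc}) (j : Fin (m + 1)) =>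
          A i.val j = true) < Jc.card :=
  stmt15_general A Jc
end
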